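/- Robustness does not imply resilience for planning systems: there exist a planning system (state set S, action set Act, partial deterministic transition function step), a set of missions T, and a set of hazards H such that the system is robust with respect to H but not resilient with respect to H. -/

import Mathlib

/-- Execution of a sequence of actions from a state, for a partial deterministic
transition function `step : S → A → Option S`. -/
def run {S A : Type*} (step : S → A → Option S) : S → List A → Option S
  | s, [] => some s
  | s, a :: P => (step s a).bind fun t => run step t P

/-- `P` is a plan for the mission `(c, g)`. -/
def IsPlan {S A : Type*} (step : S → A → Option S) (P : List A) (c g : S) : Prop :=
  run step c P = some g

/-- `s` is a state on the path of `P` started from `c` (a visited state). -/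
def OnPath {S A : Type*} (step : S → A → Option S) (P : List A) (c s : S) : Prop :=
  ∃ P₁ P₂ : List A, P = P₁ ++ P₂ ∧ run step c P₁ = some s

/-- A plan `P` for `(c, g)` is fragile w.r.t. hazards `H`. -/
def PlanFragile {S A : Type*} (step : S → A → Option S) (H : S → S → Prop)
    (P : List A) (c g : S) : Prop :=
  ∃ s t : S, OnPath step P c s ∧ H s t ∧ ¬ ∃ P' : List A, IsPlan step P' t g

/-- A plan `P` for `(c, g)` is robust w.r.t. hazards `H`: no visited state is a hazard source. -/
def PlanRobust {S A : Type*} (step : S → A → Option S) (H : S → S → Prop)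
    (P : List A) (c : S) : Prop :=
  ∀ s : S, OnPath step P c s → ∀ t : S, ¬ H s t

/-- A plan `P` for `(c, g)` is resilient w.r.t. hazards `H`. -/
def PlanResilient {S A : Type*} (step : S → A → Option S) (H : S → S → Prop)
    (P : List A) (c g : S) : Prop :=
  ∀ s t : S, H s t → OnPath step P c s → ∃ P' : List A, IsPlan step P' t g

/-- The system is fragile w.r.t. `H` over missions `T`. -/
def SysFragile {S A : Type*} (step : S → A → Option S) (T H : S → S → Prop) : Prop :=
  ∃ c g : S, T c g ∧ ∀ P : List A, IsPlan step P c g → PlanFragile step H P c g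

/-- The system is robust w.r.t. `H` over missions `T`. -/
def SysRobust {S A : Type*} (step : S → A → Option S) (T H : S → S → Prop) : Prop :=
  ∀ c g : S, T c g → ∃ P : List A, IsPlan step P c g ∧ PlanRobust step H P c

/-- The system is resilient w.r.t. `H` over missions `T`. -/
def SysResilient {S A : Type*} (step : S → A → Option S) (T H : S → S → Prop) : Prop :=
  ∀ c g : S, T c g → ∀ P : List A, IsPlan step P c g → PlanResilient step H P c g


/-! Robustness asks for one hazard-free plan per mission, while resilience constrains every plan.
So take a mission with a hazard-free shortcut and a second plan through a detour state whose
hazard leads to a dead end, from which the goal is unreachable. -/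

section Run

variable {S A : Type*} (step : S → A → Option S)

lemma onPath_nil {c s : S} : OnPath step [] c s ↔ s = c := by
  simp [OnPath, run, eq_comm]

lemma onPath_cons {a : A} {P : List A} {c s : S} :
    OnPath step (a :: P) c s ↔ s = c ∨ ∃ t, step c a = some t ∧ OnPath step P t s := by
  constructor
  · rintro ⟨_ | ⟨b, P₁⟩, P₂, hP, hrun⟩
    · exact .inl (Option.some_injective _ hrun).symm
    · obtain ⟨rfl, rfl⟩ := List.cons.inj hP
      obtain ⟨t, hstep, hrun⟩ := Option.bind_eq_some_iff.mp hrun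
      exact .inr ⟨t, hstep, P₁, P₂, rfl, hrun⟩
  · rintro (rfl | ⟨t, hstep, P₁, P₂, rfl, hrun⟩)
    · exact ⟨[], a :: P, rfl, rfl⟩
    · exact ⟨a :: P₁, P₂, rfl, by simp [run, hstep, hrun]⟩

lemma eq_of_isPlan_of_stuck {s g : S} {P : List A} (hs : ∀ a, step s a = none)
    (hP : IsPlan step P s g) : g = s := by
  cases P with
  | nil => exact (Option.some_injective _ hP).symm
  | cons a P => simp [IsPlan, run, hs] at hP

end Run

namespace Detour

inductive State
  | start
  | detour
  | goal
  | trap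

def step : State → Bool → Option State
  | .start, true => some .goal
  | .start, false => some .detour
  | .detour, _ => some .goal
  | _, _ => none

def mission (c g : State) : Prop := c = .start ∧ g = .goal

def hazard (s t : State) : Prop := s = .detour ∧ t = .trap

lemma shortcut_robust : PlanRobust step hazard [true] .start := by
  intro s hs t ⟨hdetour, _⟩
  subst hdetour
  simp [onPath_cons, onPath_nil, step] at hs

lemma detour_onPath : OnPath step [false, true] .start .detour :=
  (onPath_cons step).mpr <| .inr ⟨.detour, rfl, (onPath_cons step).mpr <| .inl rfl⟩

lemma not_isPlan_trap_goal (P : List Bool) : ¬ IsPlan step P .trap .goal := fun hP =>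
  State.noConfusion (eq_of_isPlan_of_stuck step (fun _ => rfl) hP)

end Detour

/-- Robustness does not imply resilience for planning systems. -/
theorem robust_not_imp_resilient :
    ∃ (S A : Type) (step : S → A → Option S) (T H : S → S → Prop),
      SysRobust step T H ∧ ¬ SysResilient step T H := by
  refine ⟨Detour.State, Bool, Detour.step, Detour.mission, Detour.hazard, ?robust, ?not_resilient⟩
  case robust =>
    rintro c g ⟨rfl, rfl⟩
    exact ⟨[true], rfl, Detour.shortcut_robust⟩
  case not_resilient =>
    intro hres
    obtain ⟨P, hP⟩ := hres .start .goal ⟨rfl, rfl⟩ [false, true] rfl .detour .trap ⟨rfl, rfl⟩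
      Detour.detour_onPath
    exact Detour.not_isPlan_trap_goal P hP
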